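/- arXiv:2001.04967 — 5 statements merged into one kernel-verified Lean document; each statement's English description precedes it below -/
import Mathlib

section
/- Let s ∈ {0,1}^n with n even and let σ_j(s) = s_j + s_{n+1−j} for 1 ≤ j ≤ n/2. Then for every j with 1 ≤ 2j ≤ n/2, the cumulative weight of the length-2j compositions satisfies w_{2j}(s) ≡ σ_1(s) + σ_3(s) + ⋯ + σ_{2j−1}(s) (mod 2). -/
/-- The cumulative weight `w_l(s)`: the total number of 1s summed over all
`n - l + 1` substrings of `s` of length `l`. -/
def cumWeight (s : List Bool) (l : ℕ) : ℕ :=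
  ((List.range (s.length + 1 - l)).map (fun i => ((s.drop i).take l).count true)).sum

/-- For a string `s = s_1 … s_n` (1-indexed), `σ_j(s) = s_j + s_{n+1-j}`. -/
def sigmaSeq (s : List Bool) (j : ℕ) : ℕ :=
  (if s.getD (j - 1) false then 1 else 0) + (if s.getD (s.length - j) false then 1 else 0)

lemma count_eq_sum (L : List Bool) :
    L.count true = ∑ t ∈ Finset.range L.length, (if L.getD t false then 1 else 0) := by
  induction L with
  | nil => simp
  | cons a L ih =>
    rw [List.count_cons, ih, List.length_cons, Finset.sum_range_succ']
    simp only [List.getD_cons_succ, List.getD_cons_zero]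
    cases a <;> simp

lemma listsum_eq (n : ℕ) (f : ℕ → ℕ) :
    ((List.range n).map f).sum = ∑ i ∈ Finset.range n, f i := by
  induction n with
  | zero => simp
  | succ n ih => simp [List.range_succ, Finset.sum_range_succ, ih]

lemma sum_range_double {M : Type*} [AddCommMonoid M] (j : ℕ) (f : ℕ → M) :
    ∑ i ∈ Finset.range (2 * j), f i = ∑ m ∈ Finset.range j, (f (2 * m) + f (2 * m + 1)) := by
  induction j with
  | zero => simp
  | succ j ih =>
    rw [Finset.sum_range_succ, ← ih, show 2 * (j + 1) = (2 * j + 1) + 1 by ring,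
      Finset.sum_range_succ, Finset.sum_range_succ, add_assoc]


/-- Let `s ∈ {0,1}^n` with `n` even. Then for every `j` with
`1 ≤ 2j ≤ n/2`, `w_{2j}(s) ≡ σ_1(s) + σ_3(s) + ⋯ + σ_{2j-1}(s) (mod 2)`. -/
theorem cumWeight_even_mod_two (s : List Bool) (hn : Even s.length)
    (j : ℕ) (h1 : 1 ≤ 2 * j) (h2 : 2 * j ≤ s.length / 2) :
    cumWeight s (2 * j) % 2 = (∑ m ∈ Finset.range j, sigmaSeq s (2 * m + 1)) % 2 := by
  set n := s.length with hnlen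
  obtain ⟨u, hu⟩ := hn
  set l := 2 * j with hl
  have hln : l ≤ n := by omega
  set N := n + 1 - l with hN
  suffices h : ((cumWeight s l : ℕ) : ZMod 2)
      = ((∑ m ∈ Finset.range j, sigmaSeq s (2 * m + 1) : ℕ) : ZMod 2) by
    exact (ZMod.natCast_eq_natCast_iff _ _ 2).mp h
  have hsub : ∀ a b : ZMod 2, a - b = a + b := by decide
  have h20 : (2 : ZMod 2) = 0 := by decide
  set F : ℕ → ZMod 2 := fun k => if s.getD k false then 1 else 0 with hF
  set g : ℕ → ZMod 2 := fun m => ∑ k ∈ Finset.range m, F k with hg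
  have hgadd : ∀ a b : ℕ, g (a + b) = g a + ∑ t ∈ Finset.range b, F (a + t) := by
    intro a b; exact Finset.sum_range_add F a b
  have hgsucc : ∀ a : ℕ, g (a + 1) = g a + F a := by
    intro a; rw [hgadd, Finset.sum_range_one, add_zero]
  have hcount : ∀ i, i < N →
      (((s.drop i).take l).count true : ZMod 2) = g (i + l) - g i := by
    intro i hi
    have hil : i + l ≤ n := by omega
    have hlen : ((s.drop i).take l).length = l := by
      simp; omega
    have hx : ∀ t ∈ Finset.range l,
        ((if ((s.drop i).take l).getD t false then (1 : ZMod 2) else 0)) = F (i + t) := by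
      intro t ht
      simp only [Finset.mem_range] at ht
      have ht1 : t < ((s.drop i).take l).length := by rw [hlen]; exact ht
      have ht2 : i + t < s.length := by omega
      have : ((s.drop i).take l).getD t false = s.getD (i + t) false := by
        rw [List.getD_eq_getElem _ _ ht1, List.getD_eq_getElem _ _ ht2]
        simp
      rw [this, hF]
    rw [count_eq_sum, hlen, hgadd, hsub]
    push_cast
    rw [Finset.sum_congr rfl hx, add_comm (g i), add_assoc]
    have : g i + g i = 0 := by rw [← two_mul, h20, zero_mul]
    rw [this, add_zero]
  have hcw : ((cumWeight s l : ℕ) : ZMod 2) = ∑ i ∈ Finset.range N, (g (i + l) - g i) := by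
    rw [cumWeight, listsum_eq]
    push_cast
    exact Finset.sum_congr rfl (fun i hi => hcount i (Finset.mem_range.mp hi))
  rw [hcw]
  have step1 : ∑ i ∈ Finset.range N, (g (i + l) - g i)
      = ∑ i ∈ Finset.range l, (g (N + i) - g i) := by
    rw [Finset.sum_sub_distrib, Finset.sum_sub_distrib]
    have e1 : ∑ i ∈ Finset.range N, g (i + l) = ∑ i ∈ Finset.range N, g (l + i) :=
      Finset.sum_congr rfl (fun i _ => by rw [add_comm])
    have e2 := Finset.sum_range_add g l N
    have e3 := Finset.sum_range_add g N l
    rw [add_comm l N] at e2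
    rw [e1]
    linear_combination e2 - e3 + (∑ i ∈ Finset.range N, g (l + i)
      - ∑ x ∈ Finset.range N, g x + ∑ x ∈ Finset.range l, g x
      - ∑ x ∈ Finset.range l, g (N + x)) * h20
  rw [step1, hl, sum_range_double]
  have step2 : ∀ m ∈ Finset.range j,
      (g (N + 2 * m) - g (2 * m)) + (g (N + (2 * m + 1)) - g (2 * m + 1))
      = F (2 * m) + F (N + 2 * m) := by
    intro m hm
    have ha : N + (2 * m + 1) = (N + 2 * m) + 1 := by ring
    rw [ha, hgsucc, hgsucc]
    linear_combination (g (N + 2 * m) - g (2 * m) - F (2 * m)) * h20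
  rw [Finset.sum_congr rfl step2]
  have hrefl : ∑ m ∈ Finset.range j, F (N + 2 * m)
      = ∑ m ∈ Finset.range j, F (n - (2 * m + 1)) := by
    rw [← Finset.sum_range_reflect (fun m => F (N + 2 * m)) j]
    refine Finset.sum_congr rfl (fun m hm => ?_)
    simp only [Finset.mem_range] at hm
    congr 1
    omega
  rw [Finset.sum_add_distrib, hrefl, ← Finset.sum_add_distrib]
  push_cast [sigmaSeq]
  refine (Finset.sum_congr rfl (fun m hm => ?_)).symm
  rw [hF, ← hnlen]
end

section
/- For every binary string s ∈ {0,1}^n and all nonzero x, y (e.g., nonzero real numbers, or in the field of rational functions), the prefix polynomial P_s and the composition polynomial S_s satisfy the identity P_s(x, y) · P_s(1/x, 1/y) = (n + 1) + S_s(x, y) + S_s(1/x, 1/y). -/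
open Finset

/-- All nonempty contiguous substrings of a binary string `s`. -/
def substrings (s : List Bool) : List (List Bool) :=
  (List.range s.length).flatMap
    (fun i => (List.range (s.length - i)).map (fun j => (s.drop i).take (j + 1)))

/-- Evaluation of the prefix polynomial `P_s(x,y) = Σ_{i=0}^n x^{u_i} y^{i-u_i}`,
where `u_i` is the number of 1s in the prefix of `s` of length `i` (and `i - u_i`
is its number of 0s). -/
def prefixPolyEval {R : Type*} [CommSemiring R] (s : List Bool) (x y : R) : R :=
  ∑ i ∈ Finset.range (s.length + 1),
    x ^ ((s.take i).count true) * y ^ ((s.take i).count false)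

/-- Evaluation of the composition polynomial
`S_s(x,y) = Σ_{1 ≤ i ≤ j ≤ n} x^{o_{i,j}} y^{z_{i,j}}`, summed over all nonempty
substrings of `s`, where `o` and `z` count the 1s and 0s of the substring. -/
def compPolyEval {R : Type*} [CommSemiring R] (s : List Bool) (x y : R) : R :=
  ((substrings s).map (fun u => x ^ (u.count true) * y ^ (u.count false))).sum

lemma list_sum_range {M : Type*} [AddCommMonoid M] (n : ℕ) (h : ℕ → M) :
    ((List.range n).map h).sum = ∑ i ∈ Finset.range n, h i := by
  simp [Finset.range, Multiset.range, Finset.sum]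

lemma count_take_add (s : List Bool) (c : Bool) (i k : ℕ) :
    (s.take (i + k)).count c = (s.take i).count c + ((s.drop i).take k).count c := by
  rw [List.take_add, List.count_append]

lemma count_take_mono (s : List Bool) (c : Bool) {i j : ℕ} (h : i ≤ j) :
    (s.take i).count c ≤ (s.take j).count c := by
  have h1 : s.take i = (s.take j).take i := by rw [List.take_take, Nat.min_eq_left h]
  rw [h1]
  exact (List.take_sublist _ _).count_le c

lemma pow_mul_inv_pow {F : Type*} [Field F] {x : F} (hx : x ≠ 0) {m n : ℕ} (h : m ≤ n) :
    x ^ n * (x⁻¹) ^ m = x ^ (n - m) := by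
  rw [inv_pow, ← pow_sub₀ x hx h]

lemma compPolyEval_eq {R : Type*} [CommSemiring R] (s : List Bool) (x y : R) :
    compPolyEval s x y = ∑ i ∈ Finset.range s.length, ∑ k ∈ Finset.range (s.length - i),
      x ^ (((s.drop i).take (k+1)).count true) * y ^ (((s.drop i).take (k+1)).count false) := by
  unfold compPolyEval substrings
  rw [List.map_flatMap, List.flatMap, List.sum_flatten, List.map_map, list_sum_range]
  refine Finset.sum_congr rfl fun i _ => ?_
  simp [Function.comp, List.map_map, list_sum_range]

/-- For every binary string `s ∈ {0,1}^n` and all nonzero `x, y`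
in a field, `P_s(x,y) · P_s(1/x,1/y) = (n+1) + S_s(x,y) + S_s(1/x,1/y)`. -/
theorem prefixPoly_mul_inv_eq (F : Type*) [Field F] (s : List Bool) (x y : F)
    (hx : x ≠ 0) (hy : y ≠ 0) :
    prefixPolyEval s x y * prefixPolyEval s x⁻¹ y⁻¹ =
      ((s.length : F) + 1) + compPolyEval s x y + compPolyEval s x⁻¹ y⁻¹ := by
  set a : ℕ → ℕ := fun i => (s.take i).count true with ha
  set b : ℕ → ℕ := fun i => (s.take i).count false with hb
  set t : ℕ → ℕ → F := fun p q =>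
    (x ^ a p * y ^ b p) * ((x⁻¹) ^ a q * (y⁻¹) ^ b q) with ht
  -- reformulation of `t` on the two triangles
  have tlow : ∀ q p : ℕ, q ≤ p → t p q = x ^ (a p - a q) * y ^ (b p - b q) := by
    intro q p h
    have h1 := pow_mul_inv_pow hx (count_take_mono s true h)
    have h2 := pow_mul_inv_pow hy (count_take_mono s false h)
    rw [ht]
    calc x ^ a p * y ^ b p * (x⁻¹ ^ a q * y⁻¹ ^ b q)
        = (x ^ a p * x⁻¹ ^ a q) * (y ^ b p * y⁻¹ ^ b q) := by ring
      _ = x ^ (a p - a q) * y ^ (b p - b q) := by rw [h1, h2]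
  have tup : ∀ p q : ℕ, p ≤ q → t p q = (x⁻¹) ^ (a q - a p) * (y⁻¹) ^ (b q - b p) := by
    intro p q h
    have h1 := pow_mul_inv_pow (inv_ne_zero hx) (count_take_mono s true h)
    have h2 := pow_mul_inv_pow (inv_ne_zero hy) (count_take_mono s false h)
    rw [inv_inv] at h1 h2
    rw [ht]
    calc x ^ a p * y ^ b p * (x⁻¹ ^ a q * y⁻¹ ^ b q)
        = (x⁻¹ ^ a q * x ^ a p) * (y⁻¹ ^ b q * y ^ b p) := by ring
      _ = x⁻¹ ^ (a q - a p) * y⁻¹ ^ (b q - b p) := by rw [h1, h2]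
  -- counts of slices
  have hslice : ∀ (c : Bool) (i k : ℕ),
      (s.take (i + k + 1)).count c - (s.take i).count c = ((s.drop i).take (k + 1)).count c := by
    intro c i k
    have h1 := count_take_add s c i (k + 1)
    rw [Nat.add_assoc]
    omega
  -- expand the product
  have hprod : prefixPolyEval s x y * prefixPolyEval s x⁻¹ y⁻¹ =
      ∑ p ∈ range (s.length + 1), ∑ q ∈ range (s.length + 1), t p q := by
    rw [prefixPolyEval, prefixPolyEval, Finset.sum_mul_sum]
  -- split each inner sum into q < p, q = p, q > p
  have hsplit : ∀ p ∈ range (s.length + 1),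
      ∑ q ∈ range (s.length + 1), t p q =
        (∑ q ∈ range p, t p q + t p p) + ∑ q ∈ Ico (p + 1) (s.length + 1), t p q := by
    intro p hp
    rw [Finset.mem_range] at hp
    rw [Finset.range_eq_Ico,
      ← Finset.sum_Ico_consecutive _ (Nat.zero_le p) (by omega : p ≤ s.length + 1),
      ← Finset.range_eq_Ico, Finset.sum_eq_sum_Ico_succ_bot (by omega : p < s.length + 1)]
    ring
  -- the diagonal term is 1
  have hdiag : ∀ p, t p p = 1 := by
    intro p
    have h1 : t p p = (x ^ a p * (x ^ a p)⁻¹) * (y ^ b p * (y ^ b p)⁻¹) := by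
      rw [ht]; simp [inv_pow]; ring
    rw [h1, mul_inv_cancel₀ (pow_ne_zero _ hx), mul_inv_cancel₀ (pow_ne_zero _ hy), one_mul]
  -- lower triangle = compPolyEval s x y
  have hlow : ∑ p ∈ range (s.length + 1), ∑ q ∈ range p, t p q = compPolyEval s x y := by
    rw [compPolyEval_eq, Finset.sum_sigma', Finset.sum_sigma']
    refine (Finset.sum_bij'
      (fun (z : (_ : ℕ) × ℕ) _ => (⟨z.1 + z.2 + 1, z.1⟩ : (_ : ℕ) × ℕ))
      (fun (z : (_ : ℕ) × ℕ) _ => (⟨z.2, z.1 - z.2 - 1⟩ : (_ : ℕ) × ℕ))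
      ?_ ?_ ?_ ?_ ?_).symm
    · rintro ⟨i, k⟩ hz
      simp only [Finset.mem_sigma, Finset.mem_range] at hz ⊢
      omega
    · rintro ⟨p, q⟩ hz
      simp only [Finset.mem_sigma, Finset.mem_range] at hz ⊢
      omega
    · rintro ⟨i, k⟩ hz
      simp only [Finset.mem_sigma, Finset.mem_range] at hz
      simp only [Sigma.mk.inj_iff, heq_eq_eq, true_and, and_true, eq_self_iff_true]
      omega
    · rintro ⟨p, q⟩ hz
      simp only [Finset.mem_sigma, Finset.mem_range] at hz
      simp only [Sigma.mk.inj_iff, heq_eq_eq, true_and, and_true, eq_self_iff_true]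
      omega
    · rintro ⟨i, k⟩ hz
      simp only [Finset.mem_sigma, Finset.mem_range] at hz
      rw [tlow i (i + k + 1) (by omega), ha, hb]
      simp only [hslice]
  -- upper triangle = compPolyEval s x⁻¹ y⁻¹
  have hup : ∑ p ∈ range (s.length + 1), ∑ q ∈ Ico (p + 1) (s.length + 1), t p q
      = compPolyEval s x⁻¹ y⁻¹ := by
    rw [compPolyEval_eq, Finset.sum_sigma', Finset.sum_sigma']
    refine (Finset.sum_bij'
      (fun (z : (_ : ℕ) × ℕ) _ => (⟨z.1, z.1 + z.2 + 1⟩ : (_ : ℕ) × ℕ))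
      (fun (z : (_ : ℕ) × ℕ) _ => (⟨z.1, z.2 - z.1 - 1⟩ : (_ : ℕ) × ℕ))
      ?_ ?_ ?_ ?_ ?_).symm
    · rintro ⟨i, k⟩ hz
      simp only [Finset.mem_sigma, Finset.mem_range, Finset.mem_Ico] at hz ⊢
      omega
    · rintro ⟨p, q⟩ hz
      simp only [Finset.mem_sigma, Finset.mem_range, Finset.mem_Ico] at hz ⊢
      omega
    · rintro ⟨i, k⟩ hz
      simp only [Finset.mem_sigma, Finset.mem_range] at hz
      simp only [Sigma.mk.inj_iff, heq_eq_eq, true_and, and_true, eq_self_iff_true]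
      omega
    · rintro ⟨p, q⟩ hz
      simp only [Finset.mem_sigma, Finset.mem_range, Finset.mem_Ico] at hz
      simp only [Sigma.mk.inj_iff, heq_eq_eq, true_and, and_true, eq_self_iff_true]
      omega
    · rintro ⟨i, k⟩ hz
      simp only [Finset.mem_sigma, Finset.mem_range] at hz
      rw [tup i (i + k + 1) (by omega), ha, hb]
      simp only [hslice]
  -- put everything together
  rw [hprod, Finset.sum_congr rfl hsplit]
  simp only [Finset.sum_add_distrib, hdiag, Finset.sum_const, Finset.card_range, nsmul_eq_mul,
    mul_one, hlow, hup]
  push_cast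
  ring
end

section
/- For every binary string s ∈ {0,1}^n, with d_x = wt(s) (the number of 1s in s) and d_y = n − wt(s), the following identity of polynomials with integer coefficients holds: P_s(x,y) · P*_s(x,y) = x^{d_x} y^{d_y} · (n + 1 + S_s(x,y)) + S*_s(x,y), where P*_s(x,y) = x^{d_x} y^{d_y} P_s(1/x, 1/y) and S*_s(x,y) = x^{d_x} y^{d_y} S_s(1/x, 1/y) are the reciprocal polynomials of P_s and S_s (note that d_x and d_y are simultaneously the x- and y-degrees of both P_s and S_s). -/
open MvPolynomial

/-- The prefix polynomial `P_s(x,y) = Σ_{i=0}^n x^{u_i} y^{i-u_i}` over ℤ, where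
`u_i` is the number of 1s in the prefix of `s` of length `i`; here `X 0 = x`,
`X 1 = y`. -/
noncomputable def prefixPolyInt (s : List Bool) : MvPolynomial (Fin 2) ℤ :=
  ∑ i ∈ Finset.range (s.length + 1),
    X 0 ^ ((s.take i).count true) * X 1 ^ ((s.take i).count false)

/-- The reciprocal polynomial `P*_s(x,y) = x^{d_x} y^{d_y} P_s(1/x,1/y)` of `P_s`,
where `d_x = wt(s)` and `d_y = n - wt(s)` are the `x`- and `y`-degrees of `P_s`:
each monomial `x^{u_i} y^{i-u_i}` is replaced by `x^{d_x-u_i} y^{d_y-(i-u_i)}`. -/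
noncomputable def prefixPolyRecipInt (s : List Bool) : MvPolynomial (Fin 2) ℤ :=
  ∑ i ∈ Finset.range (s.length + 1),
    X 0 ^ (s.count true - (s.take i).count true) *
      X 1 ^ (s.count false - (s.take i).count false)

/-- The composition polynomial `S_s(x,y) = Σ_{1 ≤ i ≤ j ≤ n} x^{o_{i,j}} y^{z_{i,j}}`
over ℤ, summed over all nonempty substrings of `s`. -/
noncomputable def compPolyInt (s : List Bool) : MvPolynomial (Fin 2) ℤ :=
  ((substrings s).map (fun u => X 0 ^ (u.count true) * X 1 ^ (u.count false))).sum

/-- The reciprocal polynomial `S*_s(x,y) = x^{d_x} y^{d_y} S_s(1/x,1/y)` of `S_s`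
(whose `x`- and `y`-degrees are also `d_x = wt(s)` and `d_y = n - wt(s)`): each
monomial `x^o y^z` is replaced by `x^{d_x-o} y^{d_y-z}`. -/
noncomputable def compPolyRecipInt (s : List Bool) : MvPolynomial (Fin 2) ℤ :=
  ((substrings s).map (fun u =>
    X 0 ^ (s.count true - u.count true) * X 1 ^ (s.count false - u.count false))).sum

/-!
Write `u_i` and `v_i` for the numbers of 1s and 0s in the prefix of length `i`. Expanding
`P_s · P*_s` gives one monomial `x^{u_i + d_x - u_j} y^{v_i + d_y - v_j}` for each pair `(i, j)`
of prefix lengths. The `n + 1` diagonal terms are all `x^{d_x} y^{d_y}`. For `j < i` the pair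
`(i, j)` and its mirror `(j, i)` both come from the substring `t = s_{j+1} … s_i`, which has
`u_i - u_j` ones and `v_i - v_j` zeros: the first contributes `x^{d_x} y^{d_y}` times the monomial
of `t` in `S_s`, the second the monomial of `t` in `S*_s`.
-/

open Finset

theorem Finset.sum_range_sum_range_eq_sum_diag_add {M : Type*} [AddCommMonoid M] (m : ℕ)
    (F : ℕ → ℕ → M) :
    ∑ i ∈ range m, ∑ j ∈ range m, F i j =
      ∑ i ∈ range m, F i i + ∑ i ∈ range m, ∑ j ∈ range i, (F i j + F j i) := by
  induction m with
  | zero => simp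
  | succ m ih =>
    simp only [sum_range_succ, sum_add_distrib, ih]
    abel

theorem List.count_take_eq_add_count_drop {α : Type*} [BEq α] (l : List α) (a : α) {i j : ℕ}
    (hji : j ≤ i) : (l.take i).count a = (l.take j).count a + ((l.take i).drop j).count a := by
  conv_lhs => rw [← List.take_append_drop j (l.take i)]
  rw [List.count_append, List.take_take, min_eq_left hji]

theorem sum_map_substrings {M : Type*} [AddCommMonoid M] (s : List Bool) (f : List Bool → M) :
    ((substrings s).map f).sum =
      ∑ i ∈ range (s.length + 1), ∑ j ∈ range i, f ((s.take i).drop j) := by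
  have hflat : ((substrings s).map f).sum =
      ∑ j ∈ range s.length, ∑ k ∈ range (s.length - j),
        f ((s.take (j + (k + 1))).drop j) := by
    simp only [substrings, List.flatMap_def, List.map_flatten, List.sum_flatten, List.map_map,
      Function.comp_def, List.take_drop]
    rfl
  rw [hflat, eq_comm, sum_comm' (t' := range s.length) (s' := fun j => Ico (j + 1) (s.length + 1))]
  · refine sum_congr rfl fun j _ => ?_
    rw [sum_Ico_eq_sum_range, Nat.add_sub_add_right]
    simp only [add_assoc, add_comm 1]
  · intro i j
    simp only [mem_range, mem_Ico]
    omega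

section Monomials

variable {M : Type*} [CommMonoid M] {i j : ℕ}

theorem pow_count_take_mul_pow_sub_count_take {α : Type*} [BEq α] (l : List α) (a : α) (x : M)
    (hji : j ≤ i) :
    x ^ (l.take i).count a * x ^ (l.count a - (l.take j).count a) =
      x ^ l.count a * x ^ ((l.take i).drop j).count a := by
  have hsplit := l.count_take_eq_add_count_drop a hji
  have hle := (l.take_sublist i).count_le a
  rw [← pow_add, ← pow_add]
  congr 1
  omega

theorem pow_count_take_mul_pow_sub_count_take_of_ge {α : Type*} [BEq α] (l : List α) (a : α)
    (x : M) (hji : j ≤ i) :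
    x ^ (l.take j).count a * x ^ (l.count a - (l.take i).count a) =
      x ^ (l.count a - ((l.take i).drop j).count a) := by
  have hsplit := l.count_take_eq_add_count_drop a hji
  have hle := (l.take_sublist i).count_le a
  rw [← pow_add]
  congr 1
  omega

theorem prefix_mul_recip_of_le (s : List Bool) (x y : M) (hji : j ≤ i) :
    x ^ (s.take i).count true * y ^ (s.take i).count false *
        (x ^ (s.count true - (s.take j).count true) *
          y ^ (s.count false - (s.take j).count false)) =
      x ^ s.count true * y ^ s.count false *
        (x ^ ((s.take i).drop j).count true * y ^ ((s.take i).drop j).count false) := by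
  rw [mul_mul_mul_comm, pow_count_take_mul_pow_sub_count_take s true x hji,
    pow_count_take_mul_pow_sub_count_take s false y hji, mul_mul_mul_comm]

theorem prefix_mul_recip_self (s : List Bool) (x y : M) :
    x ^ (s.take i).count true * y ^ (s.take i).count false *
        (x ^ (s.count true - (s.take i).count true) *
          y ^ (s.count false - (s.take i).count false)) =
      x ^ s.count true * y ^ s.count false := by
  simpa using prefix_mul_recip_of_le s x y (le_refl i)

theorem prefix_mul_recip_of_ge (s : List Bool) (x y : M) (hji : j ≤ i) :
    x ^ (s.take j).count true * y ^ (s.take j).count false *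
        (x ^ (s.count true - (s.take i).count true) *
          y ^ (s.count false - (s.take i).count false)) =
      x ^ (s.count true - ((s.take i).drop j).count true) *
        y ^ (s.count false - ((s.take i).drop j).count false) := by
  rw [mul_mul_mul_comm, pow_count_take_mul_pow_sub_count_take_of_ge s true x hji,
    pow_count_take_mul_pow_sub_count_take_of_ge s false y hji]

end Monomials

/-- For every binary string `s ∈ {0,1}^n`, with `d_x = wt(s)` and
`d_y = n - wt(s)`, one has the identity of polynomials with integer coefficients
`P_s(x,y) · P*_s(x,y) = x^{d_x} y^{d_y} (n + 1 + S_s(x,y)) + S*_s(x,y)`. -/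
theorem prefixPoly_mul_recip (s : List Bool) :
    prefixPolyInt s * prefixPolyRecipInt s =
      X 0 ^ (s.count true) * X 1 ^ (s.count false) *
        (((s.length : MvPolynomial (Fin 2) ℤ) + 1) + compPolyInt s) +
      compPolyRecipInt s := by
  have hdiag := sum_congr rfl fun i (_ : i ∈ range (s.length + 1)) =>
    prefix_mul_recip_self (i := i) s (X 0 : MvPolynomial (Fin 2) ℤ) (X 1)
  have hoffDiag := sum_congr rfl fun i (_ : i ∈ range (s.length + 1)) =>
    sum_congr rfl fun j (hj : j ∈ range i) =>
      have hji := (mem_range.mp hj).le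
      congr_arg₂ HAdd.hAdd (prefix_mul_recip_of_le s (X 0 : MvPolynomial (Fin 2) ℤ) (X 1) hji)
        (prefix_mul_recip_of_ge s (X 0 : MvPolynomial (Fin 2) ℤ) (X 1) hji)
  rw [prefixPolyInt, prefixPolyRecipInt, sum_mul_sum, sum_range_sum_range_eq_sum_diag_add, hdiag,
    hoffDiag, compPolyInt, compPolyRecipInt, mul_add, add_assoc, ← List.sum_map_mul_left,
    ← List.sum_map_add, sum_map_substrings, sum_const, card_range, nsmul_eq_mul]
  push_cast
  ring
end

section
/- Let q be an odd prime, let α be a primitive element (generator of the multiplicative group) of the finite field F_q, and let t ≥ 1 with 2t < q − 1. If f, g ∈ F_q[x] are polynomials of degree less than q − 1, each having at most t nonzero coefficients, and f(α^j) = g(α^j) for every integer j with −t ≤ j ≤ t, then f = g. (Hence a polynomial with at most t nonzero terms is uniquely determined by its 2t + 1 evaluations f(α^t), …, f(α^0), f(α^{−1}), …, f(α^{−t}).) -/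
open Polynomial Matrix


/-- Let `q` be an odd prime, `α` a primitive element of `F_q`
(a generator of `F_q^×`, i.e. a primitive `(q-1)`-th root of unity), and `t ≥ 1`
with `2t < q - 1`. If `f, g ∈ F_q[x]` have degree less than `q - 1` and at most
`t` nonzero coefficients each, and `f(α^j) = g(α^j)` for all integers
`-t ≤ j ≤ t`, then `f = g`. Hence a polynomial with at most `t` nonzero terms is
uniquely determined by its `2t+1` evaluations at `α^t, …, α, 1, α^{-1}, …, α^{-t}`. -/
theorem sparse_poly_eq_of_eval_eq (q t : ℕ) [Fact (Nat.Prime q)] (hq : Odd q)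
    (ht : 1 ≤ t) (htq : 2 * t < q - 1)
    (α : ZMod q) (hα : IsPrimitiveRoot α (q - 1))
    (f g : Polynomial (ZMod q))
    (hf : f.natDegree < q - 1) (hg : g.natDegree < q - 1)
    (hfs : f.support.card ≤ t) (hgs : g.support.card ≤ t)
    (heval : ∀ j : ℤ, -(t : ℤ) ≤ j → j ≤ (t : ℤ) →
      Polynomial.eval (α ^ j) f = Polynomial.eval (α ^ j) g) :
    f = g := by
  have hα0 : α ≠ 0 := hα.ne_zero (by omega)
  by_contra hne
  set h : Polynomial (ZMod q) := f - g with hh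
  have hh0 : h ≠ 0 := sub_ne_zero.mpr hne
  have hdeg : h.natDegree < q - 1 :=
    lt_of_le_of_lt (Polynomial.natDegree_sub_le f g) (max_lt hf hg)
  have hsupp : h.support ⊆ f.support ∪ g.support := by
    intro n hn
    simp only [Polynomial.mem_support_iff, hh, Polynomial.coeff_sub] at hn
    simp only [Finset.mem_union, Polynomial.mem_support_iff]
    by_contra hc
    push_neg at hc
    rw [hc.1, hc.2, sub_zero] at hn
    exact hn rfl
  set s := h.support.card with hs
  have hs_le : s ≤ 2 * t := by
    calc s ≤ (f.support ∪ g.support).card := Finset.card_le_card hsupp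
    _ ≤ f.support.card + g.support.card := Finset.card_union_le _ _
    _ ≤ 2 * t := by omega
  have hs_pos : 0 < s := Finset.card_pos.mpr (Polynomial.nonempty_support_iff.mpr hh0)
  have hcard : h.support.card = s := rfl
  set E := h.support.orderIsoOfFin hcard with hE
  set e : Fin s → ℕ := fun i => (E i : ℕ) with he
  have he_mem : ∀ i, e i ∈ h.support := fun i => (E i).2
  have he_inj : Function.Injective e := fun i j hij => by
    have : (E i : ℕ) = (E j : ℕ) := hij
    exact E.injective (Subtype.ext this)
  have he_lt : ∀ i, e i < q - 1 := fun i =>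
    lt_of_le_of_lt (Polynomial.le_natDegree_of_mem_supp _ (he_mem i)) hdeg
  set x : Fin s → ZMod q := fun i => α ^ (e i) with hx
  have hx_inj : Function.Injective x := fun i j hij =>
    he_inj (hα.pow_inj (he_lt i) (he_lt j) hij)
  set c : Fin s → ZMod q := fun i => h.coeff (e i) * α ^ (-(t : ℤ) * (e i : ℤ)) with hc
  -- evaluation of h at α^j as a sum over Fin s
  have hevalh : ∀ j : ℤ, h.eval (α ^ j) = ∑ i : Fin s, h.coeff (e i) * (α ^ j) ^ (e i) := by
    intro j
    rw [Polynomial.eval_eq_sum, Polynomial.sum]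
    rw [← Finset.sum_coe_sort h.support (fun n => h.coeff n * (α ^ j) ^ n)]
    exact (Fintype.sum_equiv E.toEquiv
      (fun i => h.coeff (e i) * (α ^ j) ^ (e i))
      (fun a => h.coeff (a : ℕ) * (α ^ j) ^ (a : ℕ)) (fun i => rfl)).symm
  have hvz : ∀ k : Fin s, h.eval (α ^ ((k : ℤ) - t)) = 0 := by
    intro k
    have hk := k.isLt
    have h1 : -(t : ℤ) ≤ (k : ℤ) - t := by omega
    have h2 : (k : ℤ) - t ≤ t := by omega
    have := heval ((k : ℤ) - t) h1 h2
    simp [hh, Polynomial.eval_sub, this]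
  have hvec : c ᵥ* (vandermonde x) = 0 := by
    funext k
    have := hvz k
    rw [hevalh] at this
    have key : ∀ i : Fin s, c i * x i ^ (k : ℕ) =
        h.coeff (e i) * (α ^ ((k : ℤ) - t)) ^ (e i) := by
      intro i
      rw [hc, hx]
      have h1 : (α ^ ((k : ℤ) - t)) ^ (e i) = α ^ (((k : ℤ) - t) * (e i : ℤ)) := by
        rw [← zpow_natCast (α ^ ((k : ℤ) - t)) (e i), ← _root_.zpow_mul]
      have h2 : ((k : ℤ) - t) * (e i : ℤ) = -(t : ℤ) * (e i : ℤ) + ((e i * (k : ℕ) : ℕ) : ℤ) := by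
        push_cast; ring
      rw [h1, h2, zpow_add₀ hα0, zpow_natCast, pow_mul]
      ring
    simp only [Matrix.vecMul, dotProduct, Matrix.vandermonde, Pi.zero_apply]
    simp only [Matrix.of_apply]
    rw [Finset.sum_congr rfl (fun i _ => key i)]
    exact this
  have hdet : IsUnit (vandermonde x).det := by
    have : (vandermonde x).det ≠ 0 := (Matrix.det_vandermonde_ne_zero_iff).mpr hx_inj
    exact Ne.isUnit this
  have hc0 : c = 0 := by
    have := congrArg (fun v => v ᵥ* (vandermonde x)⁻¹) hvec
    simpa [Matrix.vecMul_vecMul, Matrix.mul_nonsing_inv _ hdet, Matrix.vecMul_one,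
      Matrix.zero_vecMul] using this
  have i0 : Fin s := ⟨0, hs_pos⟩
  have : c i0 = 0 := by rw [hc0]; rfl
  rw [hc] at this
  have hcoeff : h.coeff (e i0) ≠ 0 := Polynomial.mem_support_iff.mp (he_mem i0)
  have hzne : α ^ (-(t : ℤ) * (e i0 : ℤ)) ≠ 0 := zpow_ne_zero _ hα0
  exact hcoeff (by
    rcases mul_eq_zero.mp this with h1 | h1
    · exact h1
    · exact absurd h1 hzne)
end

section
/- For every t ≥ 1 and every n satisfying n ≥ 156·t²·log₂(8n), there exists a code C ⊆ {0,1}^n with |C| ≥ 2^{n − ⌈156·t²·log₂(8n)⌉} (i.e., with at most O(t² log n) bits of redundancy) that corrects t composition errors with unique string recovery: for any two distinct strings s, s' ∈ C, no multiset M of compositions can be obtained both from C(s) by at most t composition errors and from C(s') by at most t composition errors. -/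
/-- The composition multiset `C(s)`: for each nonempty substring, the pair
`(number of 0s, number of 1s)`. -/
def compMultiset (s : List Bool) : Multiset (ℕ × ℕ) :=
  ((substrings s).map (fun u => (u.count false, u.count true)) : List (ℕ × ℕ))

/-- `corruptBy t N M` holds when `M` is obtained from `N` by at most `t`
composition errors: at most `t` elements of `N` are each replaced by an arbitrary
composition of the same length (`z' + w' = z + w`). -/
def corruptBy (t : ℕ) (N M : Multiset (ℕ × ℕ)) : Prop :=
  ∃ P : Multiset ((ℕ × ℕ) × (ℕ × ℕ)),
    P.card ≤ t ∧
    P.map Prod.fst ≤ N ∧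
    (∀ p ∈ P, p.1.1 + p.1.2 = p.2.1 + p.2.2) ∧
    M = N - P.map Prod.fst + P.map Prod.snd

/-!
Call a binary string front-heavy if, for every `k ≤ ⌈n/2⌉`, its suffix of length `k` has at
most as many ones as its prefix of length `k`. The compositions of length `n - k` are those of
the `k + 1` windows of that length. The inner windows have weights fixed by the total weight
and the prefix and suffix weights of order `< k`; the two outer ones have weights
`w - suffixWeight k` and `w - prefixWeight k`, and front-heaviness tells which is which. So a
front-heavy string is determined by its weight together with, for each `k`, either its
prefix and suffix weights of order `k` or its compositions of length `n - k`.

`t` composition errors alter the compositions of at most `t` lengths, so if `s` is confusable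
with `c`, their compositions of length `n - k` differ for at most `2t` values of `k`, and `s` is
determined by its weight and the prefix and suffix weights at those `k`. A confusability ball
thus holds only polynomially many (`(n+1)·((⌈n/2⌉+1)³+1)^{2t}`) front-heavy strings. Dyck
words of semilength `⌊n/2⌋` embed into the front-heavy strings, so there are at least
`catalan ⌊n/2⌋ ≥ 2^n / (2(n+1)²)` of these, and a maximal pairwise non-confusable set of them
is the code.
-/

lemma List.flatMap_ite_singleton {α β : Type*} (l : List α) (p : α → Prop) [DecidablePred p]
    (g : α → β) :
    (l.flatMap fun i => if p i then [g i] else []) = (l.filter p).map g := by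
  induction l with
  | nil => rfl
  | cons a l ih => by_cases h : p a <;> simp [h, ih]

lemma List.range_filter_lt {N M : ℕ} (h : M ≤ N) :
    (List.range N).filter (· < M) = List.range M := by
  induction N with
  | zero => simp_all
  | succ N ih =>
    rcases h.eq_or_lt with rfl | h
    · exact List.filter_eq_self.2 (by simp)
    · simp [List.range_succ, ih (by omega), show ¬ N < M by omega]

lemma List.range_filter_eq (N c : ℕ) :
    (List.range N).filter (· = c) = if c < N then [c] else [] := by
  induction N with
  | zero => simp
  | succ N ih =>
    rw [List.range_succ, List.filter_append, ih]
    grind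

lemma Multiset.eq_and_eq_of_pair_eq_pair {α : Type*} [LinearOrder α] {a b c d : α}
    (h : ({a, b} : Multiset α) = {c, d}) (hab : b ≤ a) (hcd : d ≤ c) : a = c ∧ b = d := by
  have ha : a ∈ ({c, d} : Multiset α) := h ▸ by simp
  have hb : b ∈ ({c, d} : Multiset α) := h ▸ by simp
  have hc : c ∈ ({a, b} : Multiset α) := h.symm ▸ by simp
  have hd : d ∈ ({a, b} : Multiset α) := h.symm ▸ by simp
  simp only [Multiset.insert_eq_cons, Multiset.mem_cons, Multiset.mem_singleton] at ha hb hc hd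
  grind

lemma Multiset.coe_map_range_add_one {β : Type*} (f : ℕ → β) {k : ℕ} (hk : 1 ≤ k) :
    (((List.range (k + 1)).map f : List β) : Multiset β) =
      {f 0, f k} + ((List.range' 1 (k - 1)).map f : List β) := by
  obtain ⟨k, rfl⟩ := Nat.exists_eq_add_of_le hk
  rw [List.range_eq_range', List.range'_succ, add_comm 1 k, List.range'_concat]
  simp [Multiset.insert_eq_cons, add_comm k 1, List.perm_append_singleton]

lemma Finset.card_powerset_filter_card_le_pow {α : Type*} [DecidableEq α] (X : Finset α)
    (m : ℕ) :
    (X.powerset.filter (·.card ≤ m)).card ≤ (X.card + 1) ^ m := by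
  induction m with
  | zero =>
    refine Finset.card_le_one.2 fun T hT T' hT' => ?_
    simp only [Finset.mem_filter, nonpos_iff_eq_zero, Finset.card_eq_zero] at hT hT'
    rw [hT.2, hT'.2]
  | succ m ih =>
    have hsub : X.powerset.filter (·.card ≤ m + 1) ⊆
        ((X.powerset.filter (·.card ≤ m)) ×ˢ X.insertNone).image
          fun p => p.2.elim p.1 (insert · p.1) := by
      intro T hT
      simp only [Finset.mem_filter, Finset.mem_powerset] at hT
      rcases T.eq_empty_or_nonempty with rfl | ⟨x, hx⟩
      · exact Finset.mem_image.2 ⟨(∅, none), by simp, rfl⟩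
      · refine Finset.mem_image.2 ⟨(T.erase x, some x), ?_, Finset.insert_erase hx⟩
        have := Finset.card_erase_of_mem hx
        simp only [mem_product, mem_filter, mem_powerset, mem_insertNone]
        exact ⟨⟨(erase_subset x T).trans hT.1, by omega⟩, by simpa using hT.1 hx⟩
    calc _ ≤ _ := Finset.card_le_card hsub
      _ ≤ _ := Finset.card_image_le
      _ ≤ (X.card + 1) ^ m * (X.card + 1) := by
        rw [Finset.card_product, Finset.card_insertNone]; gcongr
      _ = (X.card + 1) ^ (m + 1) := (pow_succ _ _).symm

lemma exists_pairwise_not_rel_card_le_card_mul {α : Type*} (S : Finset α) (R : α → α → Prop)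
    [DecidableRel R] (hrefl : ∀ a ∈ S, R a a) (hsymm : ∀ a b, R a b → R b a) {B : ℕ}
    (hB : ∀ c ∈ S, (S.filter (R c)).card ≤ B) :
    ∃ C ⊆ S, (C : Set α).Pairwise (fun x y => ¬ R x y) ∧ S.card ≤ C.card * B := by
  classical
  obtain ⟨C, hC, hmax⟩ := Finset.exists_max_image
    (S.powerset.filter fun D : Finset α => (D : Set α).Pairwise fun x y => ¬ R x y) Finset.card
    ⟨∅, by simp⟩
  simp only [Finset.mem_filter, Finset.mem_powerset] at hC hmax
  refine ⟨C, hC.1, hC.2, ?_⟩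
  have hcover : S ⊆ C.biUnion fun c => S.filter (R c) := by
    intro s hs
    simp only [Finset.mem_biUnion, Finset.mem_filter]
    by_contra! hfar
    have hsC : s ∉ C := fun hsC => hfar s hsC hs (hrefl s hs)
    have := hmax (insert s C) ⟨Finset.insert_subset hs hC.1, by
      rw [Finset.coe_insert]
      exact hC.2.insert fun c hc _ => ⟨fun h => hfar c hc hs (hsymm _ _ h), hfar c hc hs⟩⟩
    rw [Finset.card_insert_of_notMem hsC] at this
    omega
  exact (Finset.card_le_card hcover).trans
    (Finset.card_biUnion_le_card_mul _ _ _ fun c hc => hB c (hC.1 hc))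

namespace CompositionCode

lemma substrings_filter_length (s : List Bool) {l : ℕ} (hl : 1 ≤ l) (hls : l ≤ s.length) :
    (substrings s).filter (·.length = l) =
      (List.range (s.length - l + 1)).map fun j => (s.drop j).take l := by
  have hinner : ∀ i ∈ List.range s.length,
      ((List.range (s.length - i)).map fun j => (s.drop i).take (j + 1)).filter (·.length = l) =
        if i < s.length - l + 1 then [(s.drop i).take l] else [] := by
    intro i hi
    rw [List.filter_map, List.filter_congr (q := fun j => decide (j = l - 1)) (fun j hj => by
      simp only [List.mem_range] at hj
      simp only [Function.comp_apply, List.length_take, List.length_drop, decide_eq_decide]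
      omega), List.range_filter_eq]
    by_cases h : i < s.length - l + 1
    · simp [h, show l - 1 < s.length - i by omega, show l - 1 + 1 = l by omega]
    · simp [h, show ¬ l - 1 < s.length - i by omega]
  rw [substrings, List.filter_flatMap, List.flatMap_congr hinner, List.flatMap_ite_singleton,
    List.range_filter_lt (by omega)]

def layer (l : ℕ) (N : Multiset (ℕ × ℕ)) : Multiset (ℕ × ℕ) :=
  N.filter fun p => p.1 + p.2 = l

lemma layer_compMultiset (s : List Bool) {l : ℕ} (hl : 1 ≤ l) (hls : l ≤ s.length) :
    layer l (compMultiset s) =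
      ((List.range (s.length - l + 1)).map fun j =>
        (((s.drop j).take l).count false, ((s.drop j).take l).count true) : List (ℕ × ℕ)) := by
  rw [layer, compMultiset, Multiset.filter_coe, List.filter_map,
    List.filter_congr (q := fun u => decide (u.length = l)) (fun u _ => by
      simp [List.count_false_add_count_true]), substrings_filter_length s hl hls, List.map_map]
  rfl

lemma exists_layer_eq_of_corruptBy {t : ℕ} {N M : Multiset (ℕ × ℕ)} (h : corruptBy t N M) :
    ∃ L : Finset ℕ, L.card ≤ t ∧ ∀ l ∉ L, layer l M = layer l N := by
  classical
  obtain ⟨P, hcard, -, hlen, rfl⟩ := h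
  refine ⟨(P.map fun p => p.1.1 + p.1.2).toFinset,
    (Multiset.toFinset_card_le _).trans (by simpa using hcard), fun l hl => ?_⟩
  have hfst : layer l (P.map Prod.fst) = 0 :=
    Multiset.filter_eq_nil.2 fun q hq hql => hl <| by
      obtain ⟨p, hp, rfl⟩ := Multiset.mem_map.1 hq
      exact Multiset.mem_toFinset.2 (Multiset.mem_map.2 ⟨p, hp, hql⟩)
  have hsnd : layer l (P.map Prod.snd) = 0 :=
    Multiset.filter_eq_nil.2 fun q hq hql => hl <| by
      obtain ⟨p, hp, rfl⟩ := Multiset.mem_map.1 hq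
      exact Multiset.mem_toFinset.2 (Multiset.mem_map.2 ⟨p, hp, (hlen p hp).trans hql⟩)
  simp only [layer, Multiset.filter_add, Multiset.filter_sub] at hfst hsnd ⊢
  rw [hfst, hsnd, Multiset.sub_zero, add_zero]

def prefixWeight (k : ℕ) (s : List Bool) : ℕ := (s.take k).count true

def suffixWeight (k : ℕ) (s : List Bool) : ℕ := (s.drop (s.length - k)).count true

@[simp] lemma prefixWeight_zero (s : List Bool) : prefixWeight 0 s = 0 := by simp [prefixWeight]

@[simp] lemma suffixWeight_zero (s : List Bool) : suffixWeight 0 s = 0 := by simp [suffixWeight]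

lemma prefixWeight_le (k : ℕ) (s : List Bool) : prefixWeight k s ≤ k :=
  List.count_le_length.trans (List.length_take_le _ _)

lemma suffixWeight_le (k : ℕ) (s : List Bool) : suffixWeight k s ≤ k :=
  List.count_le_length.trans (by simp only [List.length_drop]; omega)

lemma suffixWeight_eq_prefixWeight_reverse (k : ℕ) (s : List Bool) :
    suffixWeight k s = prefixWeight k s.reverse := by
  rw [suffixWeight, prefixWeight, List.take_reverse, List.count_reverse]

lemma count_true_eq_prefixWeight_add_add_suffixWeight (s : List Bool) {j l r : ℕ}
    (h : j + l + r = s.length) :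
    s.count true = prefixWeight j s + ((s.drop j).take l).count true + suffixWeight r s := by
  have hdrop : (s.drop j).drop l = s.drop (s.length - r) := by rw [List.drop_drop]; congr 1; omega
  rw [prefixWeight, suffixWeight, ← hdrop, add_assoc, ← List.count_append,
    List.take_append_drop, ← List.count_append, List.take_append_drop]

lemma getElem_eq_of_prefixWeight_eq {a b : List Bool} {i : ℕ} (ha : i < a.length)
    (hb : i < b.length) (h : prefixWeight i a = prefixWeight i b)
    (h' : prefixWeight (i + 1) a = prefixWeight (i + 1) b) : a[i] = b[i] := by
  simp only [prefixWeight, List.take_add_one, List.getElem?_eq_getElem ha,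
    List.getElem?_eq_getElem hb, List.count_append] at h h'
  generalize a[i] = x at h' ⊢
  generalize b[i] = y at h' ⊢
  cases x <;> cases y <;> simp_all

lemma eq_of_prefixWeight_eq_of_suffixWeight_eq {a b : List Bool} (hab : a.length = b.length)
    (hpre : ∀ k ≤ (a.length + 1) / 2, prefixWeight k a = prefixWeight k b)
    (hsuf : ∀ k ≤ (a.length + 1) / 2, suffixWeight k a = suffixWeight k b) : a = b := by
  refine List.ext_getElem hab fun i ha hb => ?_
  by_cases hi : i < (a.length + 1) / 2
  · exact getElem_eq_of_prefixWeight_eq ha hb (hpre i (by omega)) (hpre (i + 1) hi)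
  · have key := getElem_eq_of_prefixWeight_eq (a := a.reverse) (b := b.reverse)
      (i := a.length - 1 - i) (by simp only [List.length_reverse]; omega)
      (by simp only [List.length_reverse]; omega)
      (by simpa only [suffixWeight_eq_prefixWeight_reverse] using hsuf _ (by omega))
      (by simpa only [suffixWeight_eq_prefixWeight_reverse] using hsuf _ (by omega))
    simpa [List.getElem_reverse, show a.length - 1 - (a.length - 1 - i) = i by omega,
      show b.length - 1 - (a.length - 1 - i) = i by omega] using key

def IsFrontHeavy (s : List Bool) : Prop :=
  ∀ k ≤ (s.length + 1) / 2, suffixWeight k s ≤ prefixWeight k s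

lemma layer_compMultiset_map_snd {s : List Bool} {n k : ℕ} (hs : s.length = n) (hk : k < n) :
    (layer (n - k) (compMultiset s)).map Prod.snd =
      ((List.range (k + 1)).map fun j => ((s.drop j).take (n - k)).count true : List ℕ) := by
  subst hs
  rw [layer_compMultiset s (by omega) (by omega), Multiset.map_coe, List.map_map,
    show s.length - (s.length - k) = k by omega]
  rfl

lemma prefixWeight_eq_and_suffixWeight_eq_of_layer_eq {a b : List Bool} {n k : ℕ}
    (ha : a.length = n) (hb : b.length = n) (hk : 1 ≤ k) (hkn : k < n)
    (hw : a.count true = b.count true)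
    (hfa : suffixWeight k a ≤ prefixWeight k a) (hfb : suffixWeight k b ≤ prefixWeight k b)
    (hlt : ∀ j < k, prefixWeight j a = prefixWeight j b ∧ suffixWeight j a = suffixWeight j b)
    (hlayer : layer (n - k) (compMultiset a) = layer (n - k) (compMultiset b)) :
    prefixWeight k a = prefixWeight k b ∧ suffixWeight k a = suffixWeight k b := by
  -- the window of length `n - k` starting at `j` misses exactly a prefix of length `j`
  -- and a suffix of length `k - j`
  have window {s : List Bool} (hs : s.length = n) {j : ℕ} (hj : j ≤ k) :
      s.count true =
        prefixWeight j s + ((s.drop j).take (n - k)).count true + suffixWeight (k - j) s :=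
    count_true_eq_prefixWeight_add_add_suffixWeight s (by omega)
  have hmaps := congrArg (Multiset.map Prod.snd) hlayer
  rw [layer_compMultiset_map_snd ha hkn, layer_compMultiset_map_snd hb hkn,
    Multiset.coe_map_range_add_one _ hk, Multiset.coe_map_range_add_one _ hk] at hmaps
  have hmid : ((List.range' 1 (k - 1)).map fun j => ((a.drop j).take (n - k)).count true) =
      (List.range' 1 (k - 1)).map fun j => ((b.drop j).take (n - k)).count true := by
    refine List.map_congr_left fun j hj => ?_
    rw [List.mem_range'_1] at hj
    have := window ha (j := j) (by omega)
    have := window hb (j := j) (by omega)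
    have := hlt j (by omega)
    have := hlt (k - j) (by omega)
    omega
  rw [hmid, add_left_inj] at hmaps
  have ha0 := window ha (Nat.zero_le k)
  have hak := window ha le_rfl
  have hb0 := window hb (Nat.zero_le k)
  have hbk := window hb le_rfl
  simp only [prefixWeight_zero, suffixWeight_zero, Nat.sub_self, Nat.sub_zero] at ha0 hak hb0 hbk
  have := Multiset.eq_and_eq_of_pair_eq_pair hmaps (by omega) (by omega)
  omega

lemma eq_of_forall_weights_eq_or_layer_eq {a b : List Bool} {n : ℕ}
    (ha : a.length = n) (hb : b.length = n) (hn : 2 ≤ n)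
    (hfa : IsFrontHeavy a) (hfb : IsFrontHeavy b) (hw : a.count true = b.count true)
    (h : ∀ k ∈ Finset.Icc 1 ((n + 1) / 2),
      (prefixWeight k a = prefixWeight k b ∧ suffixWeight k a = suffixWeight k b) ∨
        layer (n - k) (compMultiset a) = layer (n - k) (compMultiset b)) :
    a = b := by
  have hweights : ∀ k ≤ (n + 1) / 2,
      prefixWeight k a = prefixWeight k b ∧ suffixWeight k a = suffixWeight k b := by
    intro k
    induction k using Nat.strong_induction_on with
    | _ k ih =>
      intro hk
      rcases Nat.eq_zero_or_pos k with rfl | hk0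
      · simp
      rcases h k (Finset.mem_Icc.2 ⟨hk0, hk⟩) with hkw | hlayer
      · exact hkw
      exact prefixWeight_eq_and_suffixWeight_eq_of_layer_eq ha hb hk0 (by omega) hw
        (hfa k (ha ▸ hk)) (hfb k (hb ▸ hk)) (fun j hj => ih j hj (by omega)) hlayer
  exact eq_of_prefixWeight_eq_of_suffixWeight_eq (ha.trans hb.symm)
    (fun k hk => (hweights k (ha ▸ hk)).1) (fun k hk => (hweights k (ha ▸ hk)).2)

def Confusable (t : ℕ) (s s' : List Bool) : Prop :=
  ∃ M, corruptBy t (compMultiset s) M ∧ corruptBy t (compMultiset s') M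

lemma corruptBy_refl (t : ℕ) (N : Multiset (ℕ × ℕ)) : corruptBy t N N :=
  ⟨0, by simp, by simp, by simp, by simp⟩

lemma Confusable.refl (t : ℕ) (s : List Bool) : Confusable t s s :=
  ⟨_, corruptBy_refl t _, corruptBy_refl t _⟩

lemma Confusable.symm {t : ℕ} {s s' : List Bool} (h : Confusable t s s') : Confusable t s' s :=
  let ⟨M, hs, hs'⟩ := h; ⟨M, hs', hs⟩

def diffSet (n : ℕ) (c s : List Bool) : Finset ℕ :=
  (Finset.Icc 1 ((n + 1) / 2)).filter fun k =>
    layer (n - k) (compMultiset s) ≠ layer (n - k) (compMultiset c)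

lemma card_diffSet_le {t n : ℕ} {c s : List Bool} (h : Confusable t c s) :
    (diffSet n c s).card ≤ 2 * t := by
  obtain ⟨M, hc, hs⟩ := h
  obtain ⟨L, hL, hLM⟩ := exists_layer_eq_of_corruptBy hc
  obtain ⟨L', hL', hL'M⟩ := exists_layer_eq_of_corruptBy hs
  have hsub : diffSet n c s ⊆ (L ∪ L').image (n - ·) := by
    intro k hk
    simp only [diffSet, Finset.mem_filter, Finset.mem_Icc] at hk
    refine Finset.mem_image.2 ⟨n - k, ?_, by omega⟩
    by_contra hk'
    simp only [Finset.mem_union, not_or] at hk'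
    exact hk.2 ((hL'M _ hk'.2).symm.trans (hLM _ hk'.1))
  calc (diffSet n c s).card ≤ ((L ∪ L').image (n - ·)).card := Finset.card_le_card hsub
    _ ≤ (L ∪ L').card := Finset.card_image_le
    _ ≤ L.card + L'.card := Finset.card_union_le _ _
    _ ≤ 2 * t := by omega

def signature (n : ℕ) (c s : List Bool) : ℕ × Finset (ℕ × ℕ × ℕ) :=
  (s.count true, (diffSet n c s).image fun k => (k, prefixWeight k s, suffixWeight k s))

lemma signature_injOn {n : ℕ} (hn : 2 ≤ n) (c : List Bool) :
    Set.InjOn (signature n c) {s | s.length = n ∧ IsFrontHeavy s} := by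
  rintro a ⟨ha, hfa⟩ b ⟨hb, hfb⟩ h
  simp only [signature, Prod.mk.injEq] at h
  obtain ⟨hw, himage⟩ := h
  have hdiff : diffSet n c a = diffSet n c b := by
    have := congrArg (Finset.image Prod.fst) himage
    simpa [Finset.image_image, Function.comp_def] using this
  refine eq_of_forall_weights_eq_or_layer_eq ha hb hn hfa hfb hw fun k hk => ?_
  by_cases hka : k ∈ diffSet n c a
  · left
    have hmem : (k, prefixWeight k a, suffixWeight k a) ∈
        (diffSet n c b).image fun k => (k, prefixWeight k b, suffixWeight k b) :=
      himage ▸ Finset.mem_image_of_mem _ hka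
    obtain ⟨k', -, hk'⟩ := Finset.mem_image.1 hmem
    simp only [Prod.mk.injEq] at hk'
    obtain ⟨rfl, hpre, hsuf⟩ := hk'
    exact ⟨hpre.symm, hsuf.symm⟩
  · right
    have hkb : k ∉ diffSet n c b := hdiff ▸ hka
    simp only [diffSet, Finset.mem_filter, hk, true_and, not_not] at hka hkb
    exact hka.trans hkb.symm

lemma card_filter_card_diffSet_le {n : ℕ} (t : ℕ) (hn : 2 ≤ n) (c : List Bool)
    {S : Finset (List Bool)} (hS : ∀ s ∈ S, s.length = n ∧ IsFrontHeavy s) :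
    (S.filter fun s => (diffSet n c s).card ≤ 2 * t).card ≤
      (n + 1) * (((n + 1) / 2 + 1) ^ 3 + 1) ^ (2 * t) := by
  set K := (n + 1) / 2
  set box := Finset.range (K + 1) ×ˢ Finset.range (K + 1) ×ˢ Finset.range (K + 1)
  have hmaps : ∀ s ∈ S.filter fun s => (diffSet n c s).card ≤ 2 * t,
      signature n c s ∈ Finset.range (n + 1) ×ˢ box.powerset.filter (·.card ≤ 2 * t) := by
    intro s hs
    obtain ⟨hsS, hcard⟩ := Finset.mem_filter.1 hs
    simp only [signature, Finset.mem_product, Finset.mem_range, Finset.mem_filter,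
      Finset.mem_powerset]
    refine ⟨Nat.lt_succ_of_le ((hS s hsS).1 ▸ List.count_le_length), fun x hx => ?_,
      Finset.card_image_le.trans hcard⟩
    obtain ⟨k, hk, rfl⟩ := Finset.mem_image.1 hx
    have hkK : k ≤ K := (Finset.mem_Icc.1 (Finset.mem_filter.1 hk).1).2
    have := prefixWeight_le k s
    have := suffixWeight_le k s
    simp only [box, Finset.mem_product, Finset.mem_range]
    omega
  calc _ ≤ (Finset.range (n + 1) ×ˢ box.powerset.filter (·.card ≤ 2 * t)).card :=
        Finset.card_le_card_of_injOn _ hmaps <| (signature_injOn hn c).mono fun s hs =>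
          hS s (Finset.mem_filter.1 hs).1
    _ ≤ (n + 1) * (box.card + 1) ^ (2 * t) := by
        rw [Finset.card_product, Finset.card_range]
        exact Nat.mul_le_mul_left _ (Finset.card_powerset_filter_card_le_pow box _)
    _ = (n + 1) * ((K + 1) ^ 3 + 1) ^ (2 * t) := by
        simp only [box, Finset.card_product, Finset.card_range]; ring

def padJoin (n : ℕ) (a b : List Bool) : List Bool :=
  a ++ List.replicate (n - a.length - b.length) false ++ b.reverse

lemma length_padJoin {n : ℕ} {a b : List Bool} (h : a.length + b.length ≤ n) :
    (padJoin n a b).length = n := by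
  simp only [padJoin, List.append_assoc, List.length_append, List.length_replicate,
    List.length_reverse]
  omega

lemma reverse_padJoin (n : ℕ) (a b : List Bool) : (padJoin n a b).reverse = padJoin n b a := by
  simp [padJoin, Nat.sub_right_comm n a.length]

lemma take_padJoin {n k : ℕ} {a b : List Bool} (hk : k ≤ n - b.length) :
    (padJoin n a b).take k = a.take k ++ List.replicate (k - a.length) false := by
  simp only [padJoin, List.append_assoc, List.take_append, List.take_replicate,
    List.length_replicate, List.append_cancel_left_eq]
  have hpad : k - a.length ≤ n - a.length - b.length := by omega
  rw [Nat.min_eq_left hpad, Nat.sub_eq_zero_of_le hpad, List.take_zero, List.append_nil]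

lemma prefixWeight_padJoin {n k : ℕ} {a b : List Bool} (hk : k ≤ n - b.length) :
    prefixWeight k (padJoin n a b) = (a.take k).count true := by
  simp [prefixWeight, take_padJoin hk, List.count_replicate]

lemma suffixWeight_padJoin {n k : ℕ} {a b : List Bool} (hk : k ≤ n - a.length) :
    suffixWeight k (padJoin n a b) = (b.take k).count true := by
  rw [suffixWeight_eq_prefixWeight_reverse, reverse_padJoin, prefixWeight_padJoin hk]

lemma padJoin_injective {n : ℕ} {a b a' b' : List Bool} (h : a.length + b.length ≤ n)
    (ha : a.length = a'.length) (hb : b.length = b'.length)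
    (heq : padJoin n a b = padJoin n a' b') :
    a = a' ∧ b = b' := by
  constructor
  · have := congrArg (List.take a.length) heq
    rw [take_padJoin (by omega), take_padJoin (by omega)] at this
    simp only [List.take_length] at this
    simpa [ha] using this
  · have := congrArg (fun s => s.reverse.take b.length) heq
    simp only [reverse_padJoin] at this
    rw [take_padJoin (by omega), take_padJoin (by omega)] at this
    simp only [List.take_length] at this
    simpa [hb] using this

open DyckStep in
def pairUp : List DyckStep → List (Bool × Bool)
  | x :: y :: rest => (decide (x = U), decide (y = D)) :: pairUp rest
  | _ => []

lemma length_pairUp : ∀ d : List DyckStep, (pairUp d).length = d.length / 2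
  | [] | [_] => by simp [pairUp]
  | _ :: _ :: rest => by simp only [pairUp, List.length_cons, length_pairUp rest]; omega

open DyckStep in
lemma count_take_two_mul_add_count_pairUp : ∀ (d : List DyckStep) (k : ℕ), d.length % 2 = 0 →
    (d.take (2 * k)).count U + 2 * (((pairUp d).take k).map Prod.snd).count true =
      (d.take (2 * k)).count D + 2 * (((pairUp d).take k).map Prod.fst).count true
  | [], _, _ | _ :: _ :: _, 0, _ => by simp [pairUp]
  | [_], _, h => by simp at h
  | x :: y :: rest, k + 1, h => by
    have ih := count_take_two_mul_add_count_pairUp rest k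
      (by simp only [List.length_cons] at h; omega)
    rw [show 2 * (k + 1) = 2 * k + 1 + 1 by ring]
    cases x <;> cases y <;> simp only [pairUp, List.map_take, List.take_succ_cons, List.map_cons,
      List.count_cons_self, List.count_cons_of_ne, ne_eq, reduceCtorEq, not_false_eq_true,
      decide_true, decide_false, Bool.false_eq_true] at ih ⊢ <;> omega

lemma pairUp_injective : ∀ {d d' : List DyckStep}, d.length = d'.length → d.length % 2 = 0 →
    pairUp d = pairUp d' → d = d'
  | [], [], _, _, _ => rfl
  | [_], _, _, h, _ => by simp at h
  | x :: y :: rest, x' :: y' :: rest', hl, h, heq => by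
    simp only [pairUp, List.cons.injEq, Prod.mk.injEq, decide_eq_decide] at heq
    obtain ⟨⟨hx, hy⟩, hrest⟩ := heq
    obtain rfl : x = x' := by cases x <;> cases x' <;> simp_all
    obtain rfl : y = y' := by cases y <;> cases y' <;> simp_all
    rw [pairUp_injective (d := rest) (by simpa using hl)
      (by simp only [List.length_cons] at h; omega) hrest]
  | [], _ :: _, hl, _, _ | _ :: _, [], hl, _, _ | _ :: _ :: _, [_], hl, _, _ => by simp at hl

lemma length_pairUp_toList (d : DyckWord) : (pairUp d.toList).length = d.semilength := by
  rw [length_pairUp, ← d.two_mul_semilength_eq_length]; omega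

-- The odd steps of `d` (with `U ↦ 1`) are read from the left and its even steps (with `D ↦ 1`)
-- from the right, so that the ballot condition of `d` becomes front-heaviness.
def dyckString (n : ℕ) (d : DyckWord) : List Bool :=
  padJoin n ((pairUp d.toList).map Prod.fst) ((pairUp d.toList).map Prod.snd)

lemma length_dyckString {n : ℕ} {d : DyckWord} (hd : 2 * d.semilength ≤ n) :
    (dyckString n d).length = n :=
  length_padJoin (by simp only [List.length_map, length_pairUp_toList]; omega)

lemma isFrontHeavy_dyckString {n : ℕ} {d : DyckWord} (hd : d.semilength = n / 2) :
    IsFrontHeavy (dyckString n d) := by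
  intro k hk
  rw [length_dyckString (by omega)] at hk
  have hparity : d.toList.length % 2 = 0 := by rw [← d.two_mul_semilength_eq_length]; omega
  have hcount := count_take_two_mul_add_count_pairUp d.toList k hparity
  have hDU := d.count_D_le_count_U (2 * k)
  have hlen : (pairUp d.toList).length = n / 2 := by rw [length_pairUp_toList, hd]
  rw [dyckString, prefixWeight_padJoin (by rw [List.length_map]; omega),
    suffixWeight_padJoin (by rw [List.length_map]; omega), ← List.map_take, ← List.map_take]
  omega

lemma dyckString_injective {n : ℕ} {d d' : DyckWord} (hd : d.semilength = n / 2)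
    (hd' : d'.semilength = n / 2) (h : dyckString n d = dyckString n d') : d = d' := by
  have hlen : (pairUp d.toList).length = (pairUp d'.toList).length := by
    rw [length_pairUp_toList, length_pairUp_toList, hd, hd']
  obtain ⟨hfst, hsnd⟩ :=
    padJoin_injective (by simp only [List.length_map, length_pairUp_toList]; omega)
    (by simpa using hlen) (by simpa using hlen) h
  have hpairs : pairUp d.toList = pairUp d'.toList := by
    rw [← List.zip_unzip (pairUp d.toList), ← List.zip_unzip (pairUp d'.toList)]
    simp [hfst, hsnd]
  refine DyckWord.ext (pairUp_injective ?_ ?_ hpairs)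
  · rw [← d.two_mul_semilength_eq_length, ← d'.two_mul_semilength_eq_length, hd, hd']
  · rw [← d.two_mul_semilength_eq_length]; omega

def dyckStrings (n : ℕ) : Finset (List Bool) :=
  (Finset.univ : Finset {d : DyckWord // d.semilength = n / 2}).image (dyckString n ·.1)

lemma card_dyckStrings (n : ℕ) : (dyckStrings n).card = catalan (n / 2) := by
  rw [dyckStrings, Finset.card_image_of_injective _
      fun d d' h => Subtype.ext (dyckString_injective d.2 d'.2 h),
    Finset.card_univ, DyckWord.card_dyckWord_semilength_eq_catalan]

lemma length_eq_and_isFrontHeavy_of_mem_dyckStrings {n : ℕ} {s : List Bool}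
    (hs : s ∈ dyckStrings n) : s.length = n ∧ IsFrontHeavy s := by
  obtain ⟨d, -, rfl⟩ := Finset.mem_image.1 hs
  exact ⟨length_dyckString (by omega), isFrontHeavy_dyckString d.2⟩

lemma two_pow_le_mul_catalan (n : ℕ) : 2 ^ n ≤ 2 * (n + 1) ^ 2 * catalan (n / 2) := by
  have hcentral : 4 ^ (n / 2) ≤ (2 * (n / 2) + 1) * Nat.centralBinom (n / 2) :=
    Nat.four_pow_le_two_mul_add_one_mul_central_binom (n / 2)
  rw [← succ_mul_catalan_eq_centralBinom] at hcentral
  calc 2 ^ n ≤ 2 ^ (2 * (n / 2) + 1) := Nat.pow_le_pow_right (by norm_num) (by omega)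
    _ = 2 * 4 ^ (n / 2) := by rw [pow_succ, pow_mul]; ring
    _ ≤ 2 * ((2 * (n / 2) + 1) * ((n / 2 + 1) * catalan (n / 2))) := by gcongr
    _ ≤ 2 * ((n + 1) * ((n + 1) * catalan (n / 2))) := by gcongr <;> omega
    _ = 2 * (n + 1) ^ 2 * catalan (n / 2) := by ring

lemma mul_ball_bound_le_pow {n t : ℕ} (hn : 2 ≤ n) (ht : 1 ≤ t) :
    2 * (n + 1) ^ 2 * ((n + 1) * (((n + 1) / 2 + 1) ^ 3 + 1) ^ (2 * t)) ≤
      (8 * n) ^ (156 * t ^ 2) := by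
  have hbase : ((n + 1) / 2 + 1) ^ 3 + 1 ≤ (8 * n) ^ 3 := by
    have : ((n + 1) / 2 + 1) ^ 3 ≤ n ^ 3 := Nat.pow_le_pow_left (by omega) 3
    nlinarith [Nat.one_le_pow 3 n (by omega)]
  calc 2 * (n + 1) ^ 2 * ((n + 1) * (((n + 1) / 2 + 1) ^ 3 + 1) ^ (2 * t))
      = 2 * (n + 1) ^ 3 * (((n + 1) / 2 + 1) ^ 3 + 1) ^ (2 * t) := by ring
    _ ≤ (8 * n) ^ 3 * ((8 * n) ^ 3) ^ (2 * t) := by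
        gcongr
        nlinarith [Nat.pow_le_pow_left (show n + 1 ≤ 2 * n by omega) 3]
    _ = (8 * n) ^ (6 * t + 3) := by rw [← pow_mul, ← pow_add]; ring_nf
    _ ≤ (8 * n) ^ (156 * t ^ 2) := Nat.pow_le_pow_right (by omega) (by nlinarith)

lemma pow_le_two_pow_ceil_mul_logb {x : ℕ} (hx : 0 < x) (e : ℕ) :
    x ^ e ≤ 2 ^ ⌈(e : ℝ) * Real.logb 2 x⌉₊ := by
  have hx' : (0 : ℝ) < x := by exact_mod_cast hx
  have : (x : ℝ) ^ (e : ℝ) ≤ (2 : ℝ) ^ (⌈(e : ℝ) * Real.logb 2 x⌉₊ : ℝ) :=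
    calc (x : ℝ) ^ (e : ℝ) = (2 : ℝ) ^ ((e : ℝ) * Real.logb 2 x) := by
          rw [mul_comm, Real.rpow_mul (by norm_num), Real.rpow_logb (by norm_num) (by norm_num) hx']
      _ ≤ _ := Real.rpow_le_rpow_of_exponent_le (by norm_num) (Nat.le_ceil _)
  rw [Real.rpow_natCast, Real.rpow_natCast] at this
  exact_mod_cast this

lemma two_le_of_mul_logb_le {t n : ℕ} (ht : 1 ≤ t) (hn0 : 0 < n)
    (hn : 156 * (t : ℝ) ^ 2 * Real.logb 2 (8 * n) ≤ n) : 2 ≤ n := by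
  have hlog : 3 ≤ Real.logb 2 (8 * n) := by
    rw [Real.le_logb_iff_rpow_le (by norm_num) (by positivity)]
    have : (1 : ℝ) ≤ n := by exact_mod_cast hn0
    norm_num; linarith
  have : (1 : ℝ) ≤ t := by exact_mod_cast ht
  have : (2 : ℝ) ≤ n := by nlinarith
  exact_mod_cast this

lemma two_pow_sub_le_of_two_pow_le {n r c : ℕ} (hr : r ≤ n) (h : 2 ^ n ≤ 2 ^ r * c) :
    2 ^ (n - r) ≤ c := by
  rw [← Nat.sub_add_cancel hr, pow_add, mul_comm] at h
  exact Nat.le_of_mul_le_mul_left h (by positivity)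

end CompositionCode

open CompositionCode in
/-- For every `t ≥ 1` and every `n` with
`n ≥ 156·t²·log₂(8n)`, there is a code `C ⊆ {0,1}^n` of size at least
`2^(n - ⌈156·t²·log₂(8n)⌉)` (i.e., with `O(t² log n)` bits of redundancy) that
corrects `t` composition errors with unique string recovery: no multiset of
compositions can be obtained, by at most `t` composition errors each, from the
composition multisets of two distinct codewords. -/
theorem exists_t_error_correcting_code (t n : ℕ) (ht : 1 ≤ t)
    (hn : 156 * (t : ℝ) ^ 2 * Real.logb 2 (8 * n) ≤ n) :
    ∃ C : Finset (List Bool),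
      (∀ s ∈ C, s.length = n) ∧
      2 ^ (n - ⌈156 * (t : ℝ) ^ 2 * Real.logb 2 (8 * n)⌉₊) ≤ C.card ∧
      ∀ s ∈ C, ∀ s' ∈ C, s ≠ s' →
        ¬ ∃ M : Multiset (ℕ × ℕ),
            corruptBy t (compMultiset s) M ∧ corruptBy t (compMultiset s') M := by
  classical
  rcases Nat.eq_zero_or_pos n with rfl | hn0
  · exact ⟨{[]}, by simp, by simp, by simp⟩
  have hn2 := two_le_of_mul_logb_le ht hn0 hn
  have hS := fun s (hs : s ∈ dyckStrings n) => length_eq_and_isFrontHeavy_of_mem_dyckStrings hs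
  set B := (n + 1) * (((n + 1) / 2 + 1) ^ 3 + 1) ^ (2 * t)
  obtain ⟨C, hCS, hC, hcard⟩ := exists_pairwise_not_rel_card_le_card_mul (dyckStrings n)
    (Confusable t) (fun s _ => Confusable.refl t s) (fun _ _ => Confusable.symm) (B := B)
    fun c _ => (Finset.card_le_card <| Finset.monotone_filter_right _ fun _ _ =>
      card_diffSet_le).trans (card_filter_card_diffSet_le t hn2 c hS)
  refine ⟨C, fun s hs => (hS s (hCS hs)).1, two_pow_sub_le_of_two_pow_le (Nat.ceil_le.2 hn) ?_,
    fun s hs s' hs' hne => hC hs hs' hne⟩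
  have hr := pow_le_two_pow_ceil_mul_logb (x := 8 * n) (by omega) (156 * t ^ 2)
  push_cast at hr
  calc 2 ^ n ≤ 2 * (n + 1) ^ 2 * (dyckStrings n).card :=
        card_dyckStrings n ▸ two_pow_le_mul_catalan n
    _ ≤ 2 * (n + 1) ^ 2 * B * C.card := by rw [mul_assoc _ B, mul_comm B]; gcongr
    _ ≤ _ := Nat.mul_le_mul_right _ ((mul_ball_bound_le_pow hn2 ht).trans hr)
end
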